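/- arXiv:2505.01197 — 3 statements merged into one kernel-verified Lean document; each statement's English description precedes it below -/
import Mathlib

section
/- If a mechanism M satisfies f-DP and Proc is any (possibly randomized) measurable post-processing map, then Proc ∘ M also satisfies f-DP: for all neighboring datasets S, S', T(Proc(M(S)), Proc(M(S'))) ≥ T(M(S), M(S')) ≥ f. -/
open MeasureTheory ProbabilityTheory Real Set

/-- The standard normal CDF Φ. -/
noncomputable def Phi (x : ℝ) : ℝ := ((gaussianReal 0 1) (Set.Iic x)).toReal

/-- The inverse of the standard normal CDF. -/
noncomputable def PhiInv (p : ℝ) : ℝ := sInf {x : ℝ | p ≤ Phi x}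

/-- The Gaussian trade-off function `G_μ`. -/
noncomputable def Gmu (μ α : ℝ) : ℝ := Phi (PhiInv (1 - α) - μ)

/-- The trade-off function `T(P,Q)(α)`: the minimal type II error over all
measurable tests `φ` with values in `[0,1]` and type I error at most `α`. -/
noncomputable def tradeOff {Ω : Type*} [MeasurableSpace Ω] (P Q : Measure Ω) (α : ℝ) : ℝ :=
  sInf {β : ℝ | ∃ φ : Ω → ℝ, Measurable φ ∧ (∀ ω, φ ω ∈ Set.Icc (0:ℝ) 1) ∧
    (∫ ω, φ ω ∂P) ≤ α ∧ β = 1 - ∫ ω, φ ω ∂Q}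

/-- Two datasets of size `n` are neighboring if they differ in exactly one entry. -/
def Neighboring {X : Type*} {n : ℕ} (S S' : Fin n → X) : Prop :=
  ∃ i, S i ≠ S' i ∧ ∀ j, j ≠ i → S j = S' j


section AuxDPI

open MeasureTheory ProbabilityTheory

variable {Y Z : Type*} [MeasurableSpace Y] [MeasurableSpace Z]

lemma aux_integral_le_one (μ : Measure Y) [IsProbabilityMeasure μ]
    (φ : Y → ℝ) (hφ : Measurable φ) (hb : ∀ y, φ y ∈ Set.Icc (0:ℝ) 1) :
    ∫ y, φ y ∂μ ≤ 1 := by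
  rw [integral_eq_lintegral_of_nonneg_ae (Filter.Eventually.of_forall fun y => (hb y).1)
    hφ.aestronglyMeasurable]
  refine ENNReal.toReal_le_of_le_ofReal (by norm_num) ?_
  calc (∫⁻ y, ENNReal.ofReal (φ y) ∂μ) ≤ ∫⁻ _, 1 ∂μ := by
        refine lintegral_mono fun y => ?_
        simpa using ENNReal.ofReal_le_one.mpr (hb y).2
    _ = ENNReal.ofReal 1 := by simp
  
lemma aux_pull_integral (μ : Measure Y) [IsProbabilityMeasure μ]
    (κ : ProbabilityTheory.Kernel Y Z) [ProbabilityTheory.IsMarkovKernel κ]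
    (φ : Z → ℝ) (hφ : Measurable φ) (hb : ∀ z, φ z ∈ Set.Icc (0:ℝ) 1) :
    ∫ z, φ z ∂(μ.bind κ) = ∫ y, ∫ z, φ z ∂(κ y) ∂μ := by
  have hg : Measurable (fun z => ENNReal.ofReal (φ z)) := hφ.ennreal_ofReal
  have hκy : ∀ y, ∫ z, φ z ∂(κ y) = (∫⁻ z, ENNReal.ofReal (φ z) ∂(κ y)).toReal := by
    intro y
    rw [integral_eq_lintegral_of_nonneg_ae (Filter.Eventually.of_forall fun z => (hb z).1)
      hφ.aestronglyMeasurable]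
  have hle1 : ∀ y, (∫⁻ z, ENNReal.ofReal (φ z) ∂(κ y)) ≤ 1 := by
    intro y
    calc (∫⁻ z, ENNReal.ofReal (φ z) ∂(κ y)) ≤ ∫⁻ _, 1 ∂(κ y) := by
          refine lintegral_mono fun z => ?_
          simpa using ENNReal.ofReal_le_one.mpr (hb z).2
      _ = 1 := by simp
  rw [integral_eq_lintegral_of_nonneg_ae (Filter.Eventually.of_forall fun z => (hb z).1)
      hφ.aestronglyMeasurable,
    MeasureTheory.Measure.lintegral_bind κ.measurable.aemeasurable hg.aemeasurable,
    integral_eq_lintegral_of_nonneg_ae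
      (Filter.Eventually.of_forall fun y => integral_nonneg fun z => (hb z).1)
      ((hg.lintegral_kernel (κ := κ)).ennreal_toReal.aestronglyMeasurable.congr
        (Filter.Eventually.of_forall fun y => (hκy y).symm))]
  congr 1
  refine lintegral_congr fun y => ?_
  rw [hκy y, ENNReal.ofReal_toReal (lt_of_le_of_lt (hle1 y) ENNReal.one_lt_top).ne]

lemma aux_meas_psi (κ : ProbabilityTheory.Kernel Y Z) [ProbabilityTheory.IsMarkovKernel κ]
    (φ : Z → ℝ) (hφ : Measurable φ) (hb : ∀ z, φ z ∈ Set.Icc (0:ℝ) 1) :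
    Measurable (fun y => ∫ z, φ z ∂(κ y)) := by
  have hg : Measurable (fun z => ENNReal.ofReal (φ z)) := hφ.ennreal_ofReal
  have : (fun y => ∫ z, φ z ∂(κ y))
      = fun y => (∫⁻ z, ENNReal.ofReal (φ z) ∂(κ y)).toReal := by
    funext y
    rw [integral_eq_lintegral_of_nonneg_ae (Filter.Eventually.of_forall fun z => (hb z).1)
      hφ.aestronglyMeasurable]
  rw [this]
  exact (hg.lintegral_kernel (κ := κ)).ennreal_toReal

lemma aux_dpi (P Q : Measure Y) [IsProbabilityMeasure P] [IsProbabilityMeasure Q]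
    (κ : ProbabilityTheory.Kernel Y Z) [ProbabilityTheory.IsMarkovKernel κ]
    (α : ℝ) (hα : α ∈ Set.Icc (0:ℝ) 1) :
    tradeOff P Q α ≤ tradeOff (P.bind κ) (Q.bind κ) α := by
  have hbdd : BddBelow {β : ℝ | ∃ φ : Y → ℝ, Measurable φ ∧ (∀ ω, φ ω ∈ Set.Icc (0:ℝ) 1) ∧
      (∫ ω, φ ω ∂P) ≤ α ∧ β = 1 - ∫ ω, φ ω ∂Q} := by
    refine ⟨0, fun β hβ => ?_⟩
    obtain ⟨φ, hφ, hb, _, rfl⟩ := hβ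
    have := aux_integral_le_one Q φ hφ hb
    linarith
  have hne : {β : ℝ | ∃ φ : Z → ℝ, Measurable φ ∧ (∀ ω, φ ω ∈ Set.Icc (0:ℝ) 1) ∧
      (∫ ω, φ ω ∂(P.bind κ)) ≤ α ∧ β = 1 - ∫ ω, φ ω ∂(Q.bind κ)}.Nonempty := by
    refine ⟨1, fun _ => 0, measurable_const, fun ω => by norm_num, ?_, by simp⟩
    simpa using hα.1
  refine le_csInf hne ?_
  rintro β ⟨φ, hφ, hb, hI, rfl⟩
  refine csInf_le hbdd ?_
  refine ⟨fun y => ∫ z, φ z ∂(κ y), aux_meas_psi κ φ hφ hb, ?_, ?_, ?_⟩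
  · intro y
    exact ⟨integral_nonneg fun z => (hb z).1, aux_integral_le_one (κ y) φ hφ hb⟩
  · rw [← aux_pull_integral P κ φ hφ hb]; exact hI
  · rw [← aux_pull_integral Q κ φ hφ hb]

end AuxDPI

/-- post-processing by a Markov kernel preserves `f`-DP; this rests on the
data-processing inequality `T(Proc(P), Proc(Q)) ≥ T(P,Q)` for trade-off functions. -/
theorem fDP_postprocessing {X : Type*} {n : ℕ} {Y Z : Type*}
    [MeasurableSpace Y] [MeasurableSpace Z]
    (M : (Fin n → X) → Measure Y) (hM : ∀ S, IsProbabilityMeasure (M S))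
    (Proc : ProbabilityTheory.Kernel Y Z) [ProbabilityTheory.IsMarkovKernel Proc]
    (f : ℝ → ℝ)
    (hfDP : ∀ S S' : Fin n → X, Neighboring S S' →
      ∀ α ∈ Set.Icc (0:ℝ) 1, f α ≤ tradeOff (M S) (M S') α) :
    ∀ S S' : Fin n → X, Neighboring S S' → ∀ α ∈ Set.Icc (0:ℝ) 1,
      f α ≤ tradeOff ((M S).bind Proc) ((M S').bind Proc) α ∧
      tradeOff (M S) (M S') α ≤ tradeOff ((M S).bind Proc) ((M S').bind Proc) α := by
  intro S S' hN α hα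
  haveI := hM S
  haveI := hM S'
  have h := aux_dpi (M S) (M S') Proc α hα
  exact ⟨le_trans (hfDP S S' hN α hα) h, h⟩
end

section
/- For all ε ≥ 0 and μ > 0, the quantity δ(ε,μ) = Φ(-ε/μ + μ/2) - e^ε Φ(-ε/μ - μ/2) lies in [0,1], is non-increasing in ε, and tends to 0 as ε → ∞. -/
open MeasureTheory ProbabilityTheory Real Set

/-- `δ(ε,μ) = Φ(-ε/μ + μ/2) - e^ε Φ(-ε/μ - μ/2)`. -/
noncomputable def deltaOf (ε μ : ℝ) : ℝ :=
  Phi (-ε/μ + μ/2) - Real.exp ε * Phi (-ε/μ - μ/2)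

lemma Phi_eq (x : ℝ) : Phi x = ∫ t in Set.Iic x, gaussianPDFReal 0 1 t := by
  rw [Phi, gaussianReal_apply_eq_integral 0 one_ne_zero (Set.Iic x),
    ENNReal.toReal_ofReal]
  exact integral_nonneg fun t => gaussianPDFReal_nonneg _ _ _

lemma sign_iff {μ : ℝ} (hμ : 0 < μ) (ε t : ℝ) :
    Real.exp ε * gaussianPDFReal 0 1 (t - μ) ≤ gaussianPDFReal 0 1 t ↔
      t ≤ -ε/μ + μ/2 := by
  have hc : (0:ℝ) < (Real.sqrt (2 * π))⁻¹ := by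
    have := Real.pi_pos
    positivity
  simp only [gaussianPDFReal, sub_zero, NNReal.coe_one, mul_one]
  rw [mul_comm (Real.exp ε), mul_assoc, mul_le_mul_iff_right₀ hc, ← Real.exp_add,
    Real.exp_le_exp]
  have hrhs : -ε/μ + μ/2 = (μ^2/2 - ε)/μ := by field_simp; ring
  rw [hrhs, le_div_iff₀ hμ]
  constructor <;> intro h <;> nlinarith

lemma delta_repr {μ : ℝ} (hμ : 0 < μ) (ε : ℝ) :
    deltaOf ε μ =
      ∫ t, max (gaussianPDFReal 0 1 t - Real.exp ε * gaussianPDFReal 0 1 (t - μ)) 0 := by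
  set c : ℝ := -ε/μ + μ/2 with hc
  have hind : (fun t => max (gaussianPDFReal 0 1 t
        - Real.exp ε * gaussianPDFReal 0 1 (t - μ)) 0)
      = (Set.Iic c).indicator
        (fun t => gaussianPDFReal 0 1 t - Real.exp ε * gaussianPDFReal 0 1 (t - μ)) := by
    funext t
    by_cases ht : t ∈ Set.Iic c
    · rw [Set.indicator_of_mem ht]
      exact max_eq_left (sub_nonneg.2 ((sign_iff hμ ε t).2 ht))
    · rw [Set.indicator_of_notMem ht]
      refine max_eq_right (sub_nonpos.2 ?_)
      by_contra h
      exact ht ((sign_iff hμ ε t).1 (le_of_lt (lt_of_not_ge h)))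
  have hint1 : Integrable (gaussianPDFReal 0 1) (volume.restrict (Set.Iic c)) :=
    (integrable_gaussianPDFReal 0 1).restrict
  have hint2 : Integrable (fun t => Real.exp ε * gaussianPDFReal 0 1 (t - μ))
      (volume.restrict (Set.Iic c)) :=
    (((integrable_gaussianPDFReal 0 1).comp_sub_right μ).const_mul _).restrict
  have hshift : ∫ t in Set.Iic c, gaussianPDFReal 0 1 (t - μ) = Phi (c - μ) := by
    rw [← integral_indicator measurableSet_Iic]
    have heq : (Set.Iic c).indicator (fun t => gaussianPDFReal 0 1 (t - μ))
        = fun t => (Set.Iic (c - μ)).indicator (gaussianPDFReal 0 1) (t - μ) := by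
      funext t
      simp [Set.indicator_apply, Set.mem_Iic, sub_le_sub_iff_right]
    rw [heq,
      integral_sub_right_eq_self (fun t => (Set.Iic (c - μ)).indicator (gaussianPDFReal 0 1) t) μ,
      integral_indicator measurableSet_Iic, Phi_eq]
  rw [hind, integral_indicator measurableSet_Iic, integral_sub hint1 hint2,
    integral_const_mul, hshift, deltaOf, ← Phi_eq]
  have h1 : c - μ = -ε/μ - μ/2 := by rw [hc]; ring
  rw [h1]

/-- for `μ > 0`, `δ(·,μ)` takes values in `[0,1]` on `[0,∞)`,
is non-increasing in `ε`, and tends to `0` as `ε → ∞`. -/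
theorem deltaOf_properties (μ : ℝ) (hμ : 0 < μ) :
    (∀ ε : ℝ, 0 ≤ ε → deltaOf ε μ ∈ Set.Icc (0:ℝ) 1) ∧
    AntitoneOn (fun ε => deltaOf ε μ) (Set.Ici (0:ℝ)) ∧
    Filter.Tendsto (fun ε => deltaOf ε μ) Filter.atTop (nhds 0) := by
  set g : ℝ → ℝ := gaussianPDFReal 0 1 with hg
  set F : ℝ → ℝ → ℝ := fun ε t => max (g t - Real.exp ε * g (t - μ)) 0 with hF
  have hF0 : ∀ ε t, 0 ≤ F ε t := fun ε t => le_max_right _ _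
  have hFg : ∀ ε t, F ε t ≤ g t := by
    intro ε t
    refine max_le (sub_le_self _ ?_) (gaussianPDFReal_nonneg _ _ _)
    have := gaussianPDFReal_nonneg 0 1 (t - μ)
    positivity
  have hmeas : ∀ ε, Measurable (F ε) := fun ε =>
    ((measurable_gaussianPDFReal 0 1).sub
      (((measurable_gaussianPDFReal 0 1).comp (measurable_id.sub_const μ)).const_mul _)).max
      measurable_const
  have hintF : ∀ ε, Integrable (F ε) := by
    intro ε
    refine (integrable_gaussianPDFReal 0 1).mono' (hmeas ε).aestronglyMeasurable
      (Filter.Eventually.of_forall fun t => ?_)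
    rw [Real.norm_eq_abs, abs_of_nonneg (hF0 ε t)]
    exact hFg ε t
  have hrepr : ∀ ε, deltaOf ε μ = ∫ t, F ε t := fun ε => delta_repr hμ ε
  have hanti : ∀ a b : ℝ, a ≤ b → deltaOf b μ ≤ deltaOf a μ := by
    intro a b hab
    rw [hrepr a, hrepr b]
    refine integral_mono (hintF b) (hintF a) fun t => ?_
    refine max_le_max (sub_le_sub_left ?_ _) le_rfl
    exact mul_le_mul_of_nonneg_right (Real.exp_le_exp.2 hab) (gaussianPDFReal_nonneg _ _ _)
  have htend : Filter.Tendsto (fun ε => deltaOf ε μ) Filter.atTop (nhds 0) := by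
    have h0 : (0:ℝ) = ∫ _t : ℝ, (0:ℝ) := by simp
    rw [h0]
    refine Filter.Tendsto.congr (fun ε => (hrepr ε).symm) ?_
    refine tendsto_integral_filter_of_dominated_convergence g
      (Filter.Eventually.of_forall fun ε => (hmeas ε).aestronglyMeasurable)
      (Filter.Eventually.of_forall fun ε => Filter.Eventually.of_forall fun t => ?_)
      (integrable_gaussianPDFReal 0 1)
      (Filter.Eventually.of_forall fun t => ?_)
    · rw [Real.norm_eq_abs, abs_of_nonneg (hF0 ε t)]
      exact hFg ε t
    · have hpos : 0 < g (t - μ) := gaussianPDFReal_pos 0 1 _ one_ne_zero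
      refine Filter.Tendsto.congr' ?_ tendsto_const_nhds
      have hev : ∀ᶠ ε in Filter.atTop, g t / g (t - μ) ≤ Real.exp ε :=
        Real.tendsto_exp_atTop.eventually_ge_atTop _
      filter_upwards [hev] with ε hε
      refine (max_eq_right (sub_nonpos.2 ?_)).symm
      exact (div_le_iff₀ hpos).1 hε
  refine ⟨?_, fun a _ b _ hab => hanti a b hab, htend⟩
  intro ε hε
  constructor
  · rw [hrepr ε]
    exact integral_nonneg fun t => hF0 ε t
  · calc deltaOf ε μ = ∫ t, F ε t := hrepr ε
      _ ≤ ∫ t, g t := integral_mono (hintF ε) (integrable_gaussianPDFReal 0 1) fun t => hFg ε t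
      _ = 1 := integral_gaussianPDFReal_eq_one 0 one_ne_zero
end

section
/- Fix n ≥ 2, B ≥ 1, and μ > 0, and let μ_B(m) = μ / √( B (1 − (1−1/n)^m) ((n+m−1)/n)(m/n) ) for 1 ≤ m ≤ n. Then σ²_{m,B} := Δ²(m)/μ_B(m)², with Δ(m) = l/m, equals B (1 − (1−1/n)^m) ((n+m−1)/n) · l²/(m n μ²), and m · σ²_{m,B} is strictly increasing in m on {1, ..., n}; in particular the m out of n bootstrap noise contribution m σ²_{m,B} is at most the n out of n value n σ²_{n,B} with strict inequality for m < n. -/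
/-- with `μ_B(m) = μ / √(B (1 − (1−1/n)^m) ((n+m−1)/n)(m/n))` and
sensitivity `Δ(m) = l/m`, the bootstrap privatization variance
`σ²_{m,B} = Δ(m)²/μ_B(m)²` equals `B (1 − (1−1/n)^m)((n+m−1)/n) l²/(m n μ²)`, and the
noise contribution `m σ²_{m,B}` is strictly increasing in `m` on `{1,…,n}`; in
particular it is strictly smaller for `m < n` than for the `n` out of `n` bootstrap. -/
theorem bootstrap_noise_monotone (n B : ℕ) (hn : 2 ≤ n) (hB : 1 ≤ B)
    (μ l : ℝ) (hμ : 0 < μ) (hl : 0 < l) :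
    let μB : ℕ → ℝ := fun m => μ / Real.sqrt
      ((B : ℝ) * (1 - (1 - 1/(n:ℝ))^m) * (((n : ℝ) + m - 1)/n) * ((m : ℝ)/n))
    let σ2 : ℕ → ℝ := fun m => (l/(m:ℝ))^2 / (μB m)^2
    (∀ m : ℕ, 1 ≤ m → m ≤ n →
      σ2 m = (B : ℝ) * (1 - (1 - 1/(n:ℝ))^m) * (((n : ℝ) + m - 1)/n) * l^2 / (m * n * μ^2)) ∧
    (∀ m₁ m₂ : ℕ, 1 ≤ m₁ → m₁ < m₂ → m₂ ≤ n →
      (m₁ : ℝ) * σ2 m₁ < (m₂ : ℝ) * σ2 m₂) := by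
  intro μB σ2
  have h2n' : (2:ℝ) ≤ n := by exact_mod_cast hn
  have hn0 : (0:ℝ) < n := by linarith
  have hB0 : (0:ℝ) < B := by exact_mod_cast hB
  have hq0 : (0:ℝ) ≤ 1 - 1/(n:ℝ) := by
    have : 1/(n:ℝ) ≤ 1 := by
      rw [div_le_one hn0]; linarith
    linarith
  have hq1 : (1 - 1/(n:ℝ)) < 1 := by
    have : 0 < 1/(n:ℝ) := by positivity
    linarith
  have key : ∀ m : ℕ, 1 ≤ m →
      σ2 m = (B : ℝ) * (1 - (1 - 1/(n:ℝ))^m) * (((n : ℝ) + m - 1)/n) * l^2 / (m * n * μ^2) := by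
    intro m hm
    have hm0 : (0:ℝ) < m := by exact_mod_cast hm
    have h1 : (0:ℝ) < 1 - (1 - 1/(n:ℝ))^m := by
      have := pow_lt_one₀ hq0 hq1 (by omega : m ≠ 0)
      linarith
    have hnm : (0:ℝ) < (n:ℝ) + m - 1 := by linarith [h2n', hm0]
    have hX : (0:ℝ) < (B : ℝ) * (1 - (1 - 1/(n:ℝ))^m) * (((n : ℝ) + m - 1)/n) * ((m : ℝ)/n) := by
      positivity
    simp only [σ2, μB]
    rw [div_pow, div_pow, Real.sq_sqrt hX.le]
    rw [div_div_eq_mul_div, div_mul_eq_mul_div, div_div]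
    rw [div_eq_div_iff (by positivity) (by positivity)]
    field_simp
  refine ⟨fun m hm _ => key m hm, ?_⟩
  intro m₁ m₂ h1 h12 h2n
  have h2 : 1 ≤ m₂ := le_trans h1 h12.le
  rw [key m₁ h1, key m₂ h2]
  have hm10 : (0:ℝ) < m₁ := by exact_mod_cast h1
  have hm20 : (0:ℝ) < m₂ := by exact_mod_cast h2
  have collapse : ∀ m : ℕ, (0:ℝ) < m →
      (m : ℝ) * ((B : ℝ) * (1 - (1 - 1/(n:ℝ))^m) * (((n : ℝ) + m - 1)/n) * l^2 / (m * n * μ^2))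
      = ((B:ℝ) * l^2 / (n^2 * μ^2)) * ((1 - (1 - 1/(n:ℝ))^m) * ((n:ℝ) + m - 1)) := by
    intro m hm
    field_simp
  rw [collapse m₁ hm10, collapse m₂ hm20]
  have hc : (0:ℝ) < (B:ℝ) * l^2 / (n^2 * μ^2) := by positivity
  apply mul_lt_mul_of_pos_left _ hc
  have hmono : StrictMono (fun m : ℕ => (1 - (1 - 1/(n:ℝ))^m) * ((n:ℝ) + m - 1)) := by
    apply strictMono_nat_of_lt_succ
    intro m
    have hqm : (0:ℝ) ≤ (1 - 1/(n:ℝ))^m := pow_nonneg hq0 m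
    have hm0 : (0:ℝ) ≤ m := Nat.cast_nonneg m
    have hqn : (1 - 1/(n:ℝ)) * n = n - 1 := by field_simp
    have h2' : (1 - 1/(n:ℝ))^m * ((1 - 1/(n:ℝ)) * n) = (1 - 1/(n:ℝ))^m * ((n:ℝ) - 1) := by
      rw [hqn]
    simp only [pow_succ, Nat.cast_succ]
    nlinarith [mul_nonneg (mul_nonneg hqm hm0) (by linarith : (0:ℝ) ≤ 1 - (1 - 1/(n:ℝ)))]
  exact hmono h12
end
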